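/- Reciprocally derived attributable fractions satisfy their own feasible mixing bounds: suppose η^{k,ℓ}_{a,b} ∈ ℝ satisfies max(0, z^{ℓ,·}_{b,a}/z^{k,·}_{a,b} − Σ_{t≠k} z^{t,·}_{a,b}/z^{k,·}_{a,b}) ≤ η^{k,ℓ}_{a,b} ≤ min(1, z^{ℓ,·}_{b,a}/z^{k,·}_{a,b}), and define η^{ℓ,k}_{b,a} := (z^{k,·}_{a,b}/z^{ℓ,·}_{b,a}) η^{k,ℓ}_{a,b}. If margins are related by z_{a,b} := Σ_t z^{t,·}_{a,b} = Σ_t z^{t,·}_{b,a} =: z_{b,a}, then η^{ℓ,k}_{b,a} satisfies max(0, z^{k,·}_{a,b}/z^{ℓ,·}_{b,a} − Σ_{t≠ℓ} z^{t,·}_{b,a}/z^{ℓ,·}_{b,a}) ≤ η^{ℓ,k}_{b,a} ≤ min(1, z^{k,·}_{a,b}/z^{ℓ,·}_{b,a}). -/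

import Mathlib

/-!
Write `A = z^{k,·}_{a,b}`, `B = z^{ℓ,·}_{b,a}`, and `R`, `R'` for the remaining mass of the two
margins. Cleared of denominators, the feasible bounds for `η` say `0 ≤ η ≤ 1`, `A η ≤ B` and
`B - R ≤ A η`. The reciprocal fraction `η' = (A / B) η` satisfies `B η' = A η`, so its bounds
`0 ≤ η' ≤ 1`, `B η' ≤ A` and `A - R' ≤ B η'` are the same four inequalities, read in a different
order, once `A + R = B + R'`, which is reciprocity of the totals.
-/

/-- `η` lies between the feasible mixing bounds of an attributable fraction whose own margin is
`own`, whose reciprocal margin is `other`, and whose remaining margins sum to `rest`. -/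
def IsFeasibleFraction (own other rest η : ℝ) : Prop :=
  max 0 (other / own - rest / own) ≤ η ∧ η ≤ min 1 (other / own)

theorem isFeasibleFraction_iff {own other rest η : ℝ} (hown : 0 < own) :
    IsFeasibleFraction own other rest η ↔
      0 ≤ η ∧ other - rest ≤ own * η ∧ η ≤ 1 ∧ own * η ≤ other := by
  rw [IsFeasibleFraction, max_le_iff, le_min_iff, div_sub_div_same, div_le_iff₀ hown,
    le_div_iff₀ hown, mul_comm η, and_assoc]

theorem IsFeasibleFraction.reciprocal {A B R R' η : ℝ} (hA : 0 < A) (hB : 0 < B)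
    (htot : A + R = B + R') (h : IsFeasibleFraction A B R η) :
    IsFeasibleFraction B A R' (A / B * η) := by
  obtain ⟨hη₀, hlo, hη₁, hhi⟩ := (isFeasibleFraction_iff hA).mp h
  have hBη : B * (A / B * η) = A * η := by field_simp
  rw [isFeasibleFraction_iff hB, hBη, div_mul_eq_mul_div, div_le_one hB]
  exact ⟨by positivity, by linarith, hhi, mul_le_of_le_one_right hA.le hη₁⟩

/-- `zab t` is the margin `z^{t,·}_{a,b}` and `zba t` is `z^{t,·}_{b,a}`. -/
theorem reciprocal_attributable_fraction_bounds {X : Type*} [Fintype X] [DecidableEq X]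
    (zab zba : X → ℝ)
    (hab : ∀ t, 0 < zab t) (hba : ∀ t, 0 < zba t)
    (htot : ∑ t, zab t = ∑ t, zba t)
    (k ℓ : X) (η : ℝ)
    (hlo : max 0 (zba ℓ / zab k - ∑ t ∈ Finset.univ.erase k, zab t / zab k) ≤ η)
    (hhi : η ≤ min 1 (zba ℓ / zab k)) :
    max 0 (zab k / zba ℓ - ∑ t ∈ Finset.univ.erase ℓ, zba t / zba ℓ)
        ≤ (zab k / zba ℓ) * η
    ∧ (zab k / zba ℓ) * η ≤ min 1 (zab k / zba ℓ) := by
  rw [← Finset.sum_div] at hlo ⊢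
  have htot' : zab k + ∑ t ∈ Finset.univ.erase k, zab t
      = zba ℓ + ∑ t ∈ Finset.univ.erase ℓ, zba t := by
    rw [Finset.add_sum_erase _ _ (Finset.mem_univ k), Finset.add_sum_erase _ _ (Finset.mem_univ ℓ),
      htot]
  exact IsFeasibleFraction.reciprocal (hab k) (hba ℓ) htot' ⟨hlo, hhi⟩
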